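/- arXiv:2201.12052 — 2 statements merged into one kernel-verified Lean document; each statement's English description precedes it below -/
import Mathlib

section
/- Let N, d0, d1, d2 be positive integers, X ∈ ℝ^{N×d0}, Y ∈ ℝ^{N×d2}, and T ∈ (0,∞]. Let W : [0,T) → ℝ^{d0×d1} and V : [0,T) → ℝ^{d1×d2} be absolutely continuous curves satisfying, for a.e. s ∈ [0,T), ‖W'(s)‖_F ≤ ‖X‖_op ‖V(s)‖_F √(2 L(s)) and ‖V'(s)‖_F ≤ ‖X‖_op ‖W(s)‖_F √(2 L(s)). Set c₁ = 2√2 ‖X‖_op² ‖V(0)‖_F, c₂ = 2 ‖X‖_op³ ‖W(0)‖_F, and c = ‖X‖_op². Then for every t ∈ [0,T): ‖X‖_op · ‖W(t)−W(0)‖_F ≤ (1/2) · (c₁ L̄(t) + c₂ L̄(t)²) · exp(c · L̄(t)²), where L̄(t) = ∫₀ᵗ √(L(s)) ds. -/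
open MeasureTheory ProbabilityTheory
open scoped ENNReal

noncomputable section

/-- The ReLU function. -/
def relu (x : ℝ) : ℝ := max x 0

/-- Frobenius norm of a real matrix. -/
def frob {m n : ℕ} (A : Matrix (Fin m) (Fin n) ℝ) : ℝ :=
  Real.sqrt (∑ i, ∑ j, (A i j) ^ 2)

/-- ℓ²→ℓ² operator norm of a real matrix. -/
def opNorm {m n : ℕ} (A : Matrix (Fin m) (Fin n) ℝ) : ℝ :=
  ‖LinearMap.toContinuousLinearMap (Matrix.toEuclideanLin A)‖

/-- The MSE loss `L(W,V) = (1/2)‖Y − φ(XW)V‖_F²`. -/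
def mseLoss {N d0 d1 d2 : ℕ} (X : Matrix (Fin N) (Fin d0) ℝ) (Y : Matrix (Fin N) (Fin d2) ℝ)
    (W : Matrix (Fin d0) (Fin d1) ℝ) (V : Matrix (Fin d1) (Fin d2) ℝ) : ℝ :=
  (1 / 2) * (frob (Y - ((X * W).map relu) * V)) ^ 2

/-!
Write `a = ‖X‖_op`, `ℓ = √L`, `v = ‖V‖_F`, `w = ‖W‖_F` and `M(t) = ∫₀ᵗ ℓ`. Integrating the
derivative bounds gives `‖W(s) - W(0)‖_F ≤ √2 a ∫₀ˢ ℓ v` and `‖V(s) - V(0)‖_F ≤ √2 a ∫₀ˢ ℓ w`,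
so `w(s) ≤ w(0) + √2 a ∫₀ˢ ℓ v` and `v(s) ≤ v(0) + √2 a ∫₀ˢ ℓ w`. Substituting the first into the
second gives, for `s ≤ t`, the second-order Volterra inequality
`v(s) ≤ A + 2a² ∫₀ˢ ℓ(r) ∫₀ʳ ℓ(q) v(q) dq dr` with `A = v(0) + √2 a w(0) M(t)`.
Since `2a² ∫₀ᵗ ℓ M exp(a² M²) = exp(a² M(t)²) - 1`, the function `A exp(a² M²)` is a
supersolution, and a comparison principle (Grönwall's lemma applied to `∫ ℓ (v - A exp(a² M²))⁺`)
gives `v(t) ≤ A exp(a² M(t)²)`. Integrating this against `ℓ` bounds `∫₀ᵗ ℓ v`, and hence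
`‖W(t) - W(0)‖_F`.
-/

open MeasureTheory intervalIntegral Set Real

def iteratedIntegral (ℓ f : ℝ → ℝ) (t : ℝ) : ℝ :=
  ∫ s in (0:ℝ)..t, ℓ s * ∫ r in (0:ℝ)..s, ℓ r * f r

section Volterra

variable {ℓ f g M : ℝ → ℝ}

lemma continuous_primitive_of_continuous (hf : Continuous f) :
    Continuous fun t => ∫ s in (0:ℝ)..t, f s :=
  continuous_primitive (fun _ _ => hf.intervalIntegrable _ _) 0

lemma continuous_mul_integral_mul (hℓ : Continuous ℓ) (hf : Continuous f) :
    Continuous fun s => ℓ s * ∫ r in (0:ℝ)..s, ℓ r * f r :=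
  hℓ.mul (continuous_primitive_of_continuous (hℓ.mul hf))

lemma iteratedIntegral_le_mul_integral_posPart {Λ t : ℝ} (hℓ : Continuous ℓ)
    (hℓ0 : ∀ s, 0 ≤ ℓ s) (hf : Continuous f) (ht : 0 ≤ t) (hℓΛ : ∀ s ∈ Icc 0 t, ℓ s ≤ Λ) :
    iteratedIntegral ℓ f t ≤ Λ * t * ∫ r in (0:ℝ)..t, ℓ r * max (f r) 0 := by
  have hfp : Continuous fun r => ℓ r * max (f r) 0 := hℓ.mul (hf.max continuous_const)
  have hfp0 : ∀ r, 0 ≤ ℓ r * max (f r) 0 := fun r => mul_nonneg (hℓ0 r) (le_max_right _ _)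
  have hI0 : 0 ≤ ∫ r in (0:ℝ)..t, ℓ r * max (f r) 0 := integral_nonneg ht fun r _ => hfp0 r
  have hK : iteratedIntegral ℓ f t ≤ ∫ _ in (0:ℝ)..t, Λ * ∫ r in (0:ℝ)..t, ℓ r * max (f r) 0 := by
    refine integral_mono_on ht ((continuous_mul_integral_mul hℓ hf).intervalIntegrable _ _)
      intervalIntegrable_const fun s hs => ?_
    have hinner : ∫ r in (0:ℝ)..s, ℓ r * f r ≤ ∫ r in (0:ℝ)..t, ℓ r * max (f r) 0 :=
      (integral_mono_on hs.1 ((hℓ.mul hf).intervalIntegrable _ _) (hfp.intervalIntegrable _ _)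
        fun r _ => mul_le_mul_of_nonneg_left (le_max_left _ _) (hℓ0 r)).trans
        (integral_mono_interval le_rfl hs.1 hs.2 (Filter.Eventually.of_forall hfp0)
          (hfp.intervalIntegrable _ _))
    exact (mul_le_mul_of_nonneg_left hinner (hℓ0 s)).trans
      (mul_le_mul_of_nonneg_right (hℓΛ s hs) hI0)
  rw [intervalIntegral.integral_const, smul_eq_mul, sub_zero] at hK
  linarith

lemma iteratedIntegral_sub (hℓ : Continuous ℓ) (hf : Continuous f) (hg : Continuous g) (t : ℝ) :
    iteratedIntegral ℓ (f - g) t = iteratedIntegral ℓ f t - iteratedIntegral ℓ g t := by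
  rw [iteratedIntegral, iteratedIntegral, iteratedIntegral, ← integral_sub
    ((continuous_mul_integral_mul hℓ hf).intervalIntegrable _ _)
    ((continuous_mul_integral_mul hℓ hg).intervalIntegrable _ _)]
  refine integral_congr fun s _ => ?_
  simp only [Pi.sub_apply, mul_sub]
  rw [integral_sub (f := fun r => ℓ r * f r) (g := fun r => ℓ r * g r)
    ((hℓ.mul hf).intervalIntegrable _ _) ((hℓ.mul hg).intervalIntegrable _ _), mul_sub]

lemma nonpos_of_le_mul_iteratedIntegral {δ : ℝ → ℝ} {c t₀ : ℝ} (hℓ : Continuous ℓ)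
    (hℓ0 : ∀ s, 0 ≤ ℓ s) (hδ : Continuous δ) (hc : 0 ≤ c) (ht₀ : 0 ≤ t₀)
    (h : ∀ t ∈ Icc 0 t₀, δ t ≤ c * iteratedIntegral ℓ δ t) : δ t₀ ≤ 0 := by
  obtain ⟨Λ, hΛ⟩ := isCompact_Icc.exists_bound_of_continuousOn (hℓ.continuousOn (s := Icc 0 t₀))
  have hℓΛ : ∀ s ∈ Icc 0 t₀, ℓ s ≤ Λ := fun s hs => (le_abs_self _).trans (hΛ s hs)
  have hΛ0 : 0 ≤ Λ := (hℓ0 0).trans (hℓΛ 0 ⟨le_rfl, ht₀⟩)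
  set D : ℝ → ℝ := fun t => ∫ r in (0:ℝ)..t, ℓ r * max (δ r) 0
  have hDc : Continuous fun r => ℓ r * max (δ r) 0 := hℓ.mul (hδ.max continuous_const)
  have hD_nonneg : ∀ t, 0 ≤ t → 0 ≤ D t := fun t ht =>
    integral_nonneg ht fun r _ => mul_nonneg (hℓ0 r) (le_max_right _ _)
  have hpos : ∀ t ∈ Icc 0 t₀, max (δ t) 0 ≤ c * (Λ * t₀) * D t := fun t ht => by
    refine max_le ((h t ht).trans ?_) (by have := hD_nonneg t ht.1; positivity)
    have hK := iteratedIntegral_le_mul_integral_posPart hℓ hℓ0 hδ ht.1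
      fun s hs => hℓΛ s ⟨hs.1, hs.2.trans ht.2⟩
    have hΛt : Λ * t * D t ≤ Λ * t₀ * D t := by
      gcongr
      exacts [hD_nonneg t ht.1, ht.2]
    nlinarith
  -- `D` vanishes by Grönwall's lemma, as `D' = ℓ δ⁺ ≤ Λ c Λ t₀ D`
  have hD0 : ∀ t ∈ Icc 0 t₀, D t = 0 := by
    refine eq_zero_of_abs_deriv_le_mul_abs_self_of_eq_zero_right (K := Λ * (c * (Λ * t₀)))
      (continuous_primitive_of_continuous hDc).continuousOn
      (fun t _ => (hDc.integral_hasStrictDerivAt 0 t).hasDerivAt.hasDerivWithinAt)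
      integral_same fun t ht => ?_
    have ht' : t ∈ Icc 0 t₀ := Ico_subset_Icc_self ht
    rw [norm_of_nonneg (mul_nonneg (hℓ0 t) (le_max_right _ _)), norm_of_nonneg (hD_nonneg t ht.1),
      mul_assoc]
    exact mul_le_mul (hℓΛ t ht') (hpos t ht') (le_max_right _ _) hΛ0
  have := hpos t₀ ⟨ht₀, le_rfl⟩
  rw [hD0 t₀ ⟨ht₀, le_rfl⟩, mul_zero] at this
  exact (le_max_left _ _).trans this

lemma integral_eq_of_hasDerivAt_of_eq_zero (hℓ : Continuous ℓ) (hM : ∀ s, HasDerivAt M (ℓ s) s)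
    (hM0 : M 0 = 0) (t : ℝ) : ∫ s in (0:ℝ)..t, ℓ s = M t := by
  rw [integral_eq_sub_of_hasDerivAt (fun x _ => hM x) (hℓ.intervalIntegrable _ _), hM0, sub_zero]

lemma le_of_le_add_mul_iteratedIntegral {u φ : ℝ → ℝ} {A c t₀ : ℝ} (hℓ : Continuous ℓ)
    (hℓ0 : ∀ s, 0 ≤ ℓ s) (hu : Continuous u) (hφ : Continuous φ) (hc : 0 ≤ c) (ht₀ : 0 ≤ t₀)
    (hsub : ∀ t ∈ Icc 0 t₀, u t ≤ A + c * iteratedIntegral ℓ u t)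
    (hsuper : ∀ t ∈ Icc 0 t₀, A + c * iteratedIntegral ℓ φ t ≤ φ t) : u t₀ ≤ φ t₀ := by
  refine sub_nonpos.1 (nonpos_of_le_mul_iteratedIntegral (δ := u - φ) hℓ hℓ0 (hu.sub hφ) hc ht₀
    fun t ht => ?_)
  rw [iteratedIntegral_sub hℓ hu hφ, Pi.sub_apply]
  linarith [hsub t ht, hsuper t ht]

lemma add_two_mul_iteratedIntegral_exp_le (hℓ : Continuous ℓ) (hℓ0 : ∀ s, 0 ≤ ℓ s)
    (hM : ∀ s, HasDerivAt M (ℓ s) s) (hM0 : M 0 = 0) {A c t : ℝ} (hA : 0 ≤ A) (hc : 0 ≤ c)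
    (ht : 0 ≤ t) :
    A + 2 * c * iteratedIntegral ℓ (fun r => A * exp (c * M r ^ 2)) t ≤ A * exp (c * M t ^ 2) := by
  have hM_mono : Monotone M := monotone_of_hasDerivAt_nonneg hM hℓ0
  have hMc : Continuous M := continuous_iff_continuousAt.2 fun s => (hM s).continuousAt
  have hinner : ∀ s ∈ Icc 0 t, ∫ r in (0:ℝ)..s, ℓ r * (A * exp (c * M r ^ 2))
      ≤ A * (M s * exp (c * M s ^ 2)) := fun s hs =>
    calc ∫ r in (0:ℝ)..s, ℓ r * (A * exp (c * M r ^ 2))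
        ≤ ∫ r in (0:ℝ)..s, ℓ r * (A * exp (c * M s ^ 2)) := by
          refine integral_mono_on hs.1 ((by fun_prop : Continuous _).intervalIntegrable _ _)
            ((by fun_prop : Continuous _).intervalIntegrable _ _) fun r hr => ?_
          have hMr : 0 ≤ M r := hM0 ▸ hM_mono hr.1
          gcongr
          exacts [hℓ0 r, hM_mono hr.2]
      _ = A * (M s * exp (c * M s ^ 2)) := by
          rw [intervalIntegral.integral_mul_const, integral_eq_of_hasDerivAt_of_eq_zero hℓ hM hM0]
          ring
  have houter : iteratedIntegral ℓ (fun r => A * exp (c * M r ^ 2)) t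
      ≤ ∫ s in (0:ℝ)..t, ℓ s * (A * (M s * exp (c * M s ^ 2))) :=
    integral_mono_on ht ((continuous_mul_integral_mul hℓ (by fun_prop)).intervalIntegrable _ _)
      ((by fun_prop : Continuous _).intervalIntegrable _ _)
      fun s hs => mul_le_mul_of_nonneg_left (hinner s hs) (hℓ0 s)
  have hφ : ∀ s, HasDerivAt (fun r => A * exp (c * M r ^ 2))
      (2 * c * (ℓ s * (A * (M s * exp (c * M s ^ 2))))) s := fun s =>
    ((((hM s).fun_pow 2).const_mul c).exp.const_mul A).congr_deriv (by push_cast; ring)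
  have hFTC : 2 * c * ∫ s in (0:ℝ)..t, ℓ s * (A * (M s * exp (c * M s ^ 2)))
      = A * exp (c * M t ^ 2) - A := by
    rw [← intervalIntegral.integral_const_mul, integral_eq_sub_of_hasDerivAt (fun s _ => hφ s)
      ((by fun_prop : Continuous _).intervalIntegrable _ _), hM0]
    simp
  nlinarith [mul_le_mul_of_nonneg_left houter (by positivity : (0:ℝ) ≤ 2 * c)]

theorem le_mul_exp_of_le_add_iteratedIntegral {v : ℝ → ℝ} {A c t₀ : ℝ} (hℓ : Continuous ℓ)
    (hℓ0 : ∀ s, 0 ≤ ℓ s) (hM : ∀ s, HasDerivAt M (ℓ s) s) (hM0 : M 0 = 0) (hv : Continuous v)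
    (hA : 0 ≤ A) (hc : 0 ≤ c) (ht₀ : 0 ≤ t₀)
    (h : ∀ t ∈ Icc 0 t₀, v t ≤ A + 2 * c * iteratedIntegral ℓ v t) :
    v t₀ ≤ A * exp (c * M t₀ ^ 2) := by
  have hMc : Continuous M := continuous_iff_continuousAt.2 fun s => (hM s).continuousAt
  exact le_of_le_add_mul_iteratedIntegral hℓ hℓ0 hv (by fun_prop) (by positivity) ht₀ h
    fun t ht => add_two_mul_iteratedIntegral_exp_le hℓ hℓ0 hM hM0 hA hc ht.1

lemma le_add_mul_iteratedIntegral_of_le_add_integral_mul {v w : ℝ → ℝ} {b t : ℝ}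
    (hℓ : Continuous ℓ) (hℓ0 : ∀ s, 0 ≤ ℓ s) (hM : ∀ s, HasDerivAt M (ℓ s) s) (hM0 : M 0 = 0)
    (hv : Continuous v) (hw : Continuous w) (hb : 0 ≤ b) (ht : 0 ≤ t)
    (hvw : v t ≤ v 0 + b * ∫ r in (0:ℝ)..t, ℓ r * w r)
    (hwv : ∀ s ∈ Icc 0 t, w s ≤ w 0 + b * ∫ r in (0:ℝ)..s, ℓ r * v r) :
    v t ≤ v 0 + b * w 0 * M t + b ^ 2 * iteratedIntegral ℓ v t := by
  have hint : ∫ s in (0:ℝ)..t, ℓ s * w s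
      ≤ ∫ s in (0:ℝ)..t, (w 0 * ℓ s + b * (ℓ s * ∫ r in (0:ℝ)..s, ℓ r * v r)) :=
    integral_mono_on ht ((hℓ.mul hw).intervalIntegrable _ _)
      (((continuous_const.mul hℓ).add
        (continuous_const.mul (continuous_mul_integral_mul hℓ hv))).intervalIntegrable _ _)
      fun s hs => by nlinarith [hwv s hs, hℓ0 s]
  rw [integral_add (f := fun s => w 0 * ℓ s)
    (g := fun s => b * (ℓ s * ∫ r in (0:ℝ)..s, ℓ r * v r))
    ((continuous_const.mul hℓ).intervalIntegrable _ _)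
    ((continuous_const.mul (continuous_mul_integral_mul hℓ hv)).intervalIntegrable _ _),
    intervalIntegral.integral_const_mul, intervalIntegral.integral_const_mul,
    integral_eq_of_hasDerivAt_of_eq_zero hℓ hM hM0] at hint
  have := mul_le_mul_of_nonneg_left hint hb
  rw [iteratedIntegral]
  linarith

theorem integral_mul_le_of_le_add_integral_mul {v w : ℝ → ℝ} {b t : ℝ} (hℓ : Continuous ℓ)
    (hℓ0 : ∀ s, 0 ≤ ℓ s) (hM : ∀ s, HasDerivAt M (ℓ s) s) (hM0 : M 0 = 0)
    (hv : Continuous v) (hw : Continuous w) (hv0 : 0 ≤ v 0) (hw0 : 0 ≤ w 0) (hb : 0 ≤ b)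
    (ht : 0 ≤ t)
    (hvw : ∀ s ∈ Icc 0 t, v s ≤ v 0 + b * ∫ r in (0:ℝ)..s, ℓ r * w r)
    (hwv : ∀ s ∈ Icc 0 t, w s ≤ w 0 + b * ∫ r in (0:ℝ)..s, ℓ r * v r) :
    ∫ s in (0:ℝ)..t, ℓ s * v s
      ≤ (v 0 * M t + b * w 0 * (M t ^ 2 / 2)) * exp (b ^ 2 / 2 * M t ^ 2) := by
  have hM_mono : Monotone M := monotone_of_hasDerivAt_nonneg hM hℓ0
  have hMnn : ∀ s, 0 ≤ s → 0 ≤ M s := fun s hs => hM0 ▸ hM_mono hs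
  have hMc : Continuous M := continuous_iff_continuousAt.2 fun s => (hM s).continuousAt
  have hv_le : ∀ s ∈ Icc 0 t, v s ≤ (v 0 + b * w 0 * M s) * exp (b ^ 2 / 2 * M s ^ 2) := by
    intro s hs
    have hA : 0 ≤ v 0 + b * w 0 * M s := by have := hMnn s hs.1; positivity
    refine le_mul_exp_of_le_add_iteratedIntegral hℓ hℓ0 hM hM0 hv hA (by positivity) hs.1
      fun r hr => ?_
    have hrt : Icc 0 r ⊆ Icc 0 t := Icc_subset_Icc_right (hr.2.trans hs.2)
    have := le_add_mul_iteratedIntegral_of_le_add_integral_mul hℓ hℓ0 hM hM0 hv hw hb hr.1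
      (hvw r (hrt ⟨hr.1, le_rfl⟩)) fun u hu => hwv u (hrt hu)
    nlinarith [mul_le_mul_of_nonneg_left (hM_mono hr.2) (mul_nonneg hb hw0)]
  have hF : ∀ s, HasDerivAt (fun r => v 0 * M r + b * w 0 * (M r ^ 2 / 2))
      (ℓ s * (v 0 + b * w 0 * M s)) s := fun s =>
    (((hM s).const_mul _).add ((((hM s).fun_pow 2).div_const 2).const_mul _)).congr_deriv
      (by push_cast; ring)
  calc ∫ s in (0:ℝ)..t, ℓ s * v s
      ≤ ∫ s in (0:ℝ)..t, ℓ s * (v 0 + b * w 0 * M s) * exp (b ^ 2 / 2 * M t ^ 2) := by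
        refine integral_mono_on ht ((hℓ.mul hv).intervalIntegrable _ _)
          ((by fun_prop : Continuous _).intervalIntegrable _ _) fun s hs => ?_
        have hA : 0 ≤ v 0 + b * w 0 * M s := by have := hMnn s hs.1; positivity
        rw [mul_assoc]
        refine mul_le_mul_of_nonneg_left ((hv_le s hs).trans ?_) (hℓ0 s)
        gcongr
        exacts [hMnn s hs.1, hM_mono hs.2]
    _ = (v 0 * M t + b * w 0 * (M t ^ 2 / 2)) * exp (b ^ 2 / 2 * M t ^ 2) := by
        rw [intervalIntegral.integral_mul_const, integral_eq_sub_of_hasDerivAt (fun s _ => hF s)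
          ((by fun_prop : Continuous _).intervalIntegrable _ _), hM0]
        ring

end Volterra

section Frobenius

variable {m n : ℕ}

lemma frob_eq_norm_toLp (A : Matrix (Fin m) (Fin n) ℝ) :
    frob A = ‖WithLp.toLp 2 (fun p : Fin m × Fin n => A p.1 p.2)‖ := by
  rw [EuclideanSpace.norm_eq, frob, Fintype.sum_prod_type]
  simp

lemma frob_nonneg (A : Matrix (Fin m) (Fin n) ℝ) : 0 ≤ frob A := sqrt_nonneg _

lemma frob_le_frob_add_frob_sub (A B : Matrix (Fin m) (Fin n) ℝ) :
    frob A ≤ frob B + frob (A - B) := by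
  simp only [frob_eq_norm_toLp]
  exact norm_le_norm_add_norm_sub' _ _

@[fun_prop]
lemma continuous_frob : Continuous (frob : Matrix (Fin m) (Fin n) ℝ → ℝ) := by
  unfold frob
  fun_prop

lemma frob_sub_le_integral {F F' : ℝ → Matrix (Fin m) (Fin n) ℝ} {ρ : ℝ → ℝ} {t : ℝ} (ht : 0 ≤ t)
    (hF : ∀ i j, IntervalIntegrable (fun s => F' s i j) volume 0 t ∧
      F t i j - F 0 i j = ∫ s in (0:ℝ)..t, F' s i j)
    (hρ : IntervalIntegrable ρ volume 0 t) (hF' : ∀ᵐ s, s ∈ Ioc 0 t → frob (F' s) ≤ ρ s) :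
    frob (F t - F 0) ≤ ∫ s in (0:ℝ)..t, ρ s := by
  set e : Matrix (Fin m) (Fin n) ℝ → EuclideanSpace ℝ (Fin m × Fin n) :=
    fun A => WithLp.toLp 2 fun p => A p.1 p.2
  have he : e (F t - F 0) = ∫ s in (0:ℝ)..t, e (F' s) := by
    ext p
    rw [integral_of_le ht, eval_integral_piLp (f := fun s => e (F' s))
      fun p => (intervalIntegrable_iff_integrableOn_Ioc_of_le ht).1 (hF p.1 p.2).1,
      ← integral_of_le ht]
    exact (hF p.1 p.2).2
  calc frob (F t - F 0) = ‖e (F t - F 0)‖ := frob_eq_norm_toLp _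
    _ = ‖∫ s in (0:ℝ)..t, e (F' s)‖ := by rw [he]
    _ ≤ ∫ s in (0:ℝ)..t, ρ s :=
      norm_integral_le_of_norm_le ht (by simpa only [frob_eq_norm_toLp] using hF') hρ

end Frobenius

section Trajectory

variable {m n : ℕ} {F F' : ℝ → Matrix (Fin m) (Fin n) ℝ} {T : ℝ≥0∞} {t : ℝ}

lemma exists_continuous_eqOn_of_sub_eq_integral (ht : 0 ≤ t) (htT : ENNReal.ofReal t < T)
    (hF : ∀ t : ℝ, 0 ≤ t → ENNReal.ofReal t < T → ∀ i j,
      IntervalIntegrable (fun s => F' s i j) volume 0 t ∧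
      F t i j - F 0 i j = ∫ s in (0:ℝ)..t, F' s i j) :
    ∃ G : ℝ → Matrix (Fin m) (Fin n) ℝ, Continuous G ∧ EqOn G F (Icc 0 t) := by
  have hFc : ContinuousOn F (Icc 0 t) := continuousOn_pi.2 fun i => continuousOn_pi.2 fun j => by
    have hprim := continuousOn_primitive_interval' (hF t ht htT i j).1 left_mem_uIcc
    rw [uIcc_of_le ht] at hprim
    refine ((continuousOn_const (c := F 0 i j)).add hprim).congr fun s hs => ?_
    have := (hF s hs.1 ((ENNReal.ofReal_le_ofReal hs.2).trans_lt htT) i j).2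
    simp only [Pi.add_apply]
    linarith
  exact ⟨IccExtend ht ((Icc 0 t).domRestrict F), hFc.domRestrict.Icc_extend',
    fun s hs => IccExtend_of_mem ht _ hs⟩

lemma frob_sub_le_integral_of_ae_le {g ρ : ℝ → ℝ}
    (hF : ∀ t : ℝ, 0 ≤ t → ENNReal.ofReal t < T → ∀ i j,
      IntervalIntegrable (fun s => F' s i j) volume 0 t ∧
      F t i j - F 0 i j = ∫ s in (0:ℝ)..t, F' s i j)
    (hF' : ∀ᵐ s ∂volume, 0 ≤ s → ENNReal.ofReal s < T → frob (F' s) ≤ g s)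
    (htT : ENNReal.ofReal t < T) (hρ : Continuous ρ) (hgρ : EqOn g ρ (Icc 0 t)) :
    ∀ s ∈ Icc 0 t, frob (F s - F 0) ≤ ∫ r in (0:ℝ)..s, ρ r := by
  intro s hs
  have hsT : ∀ r ∈ Icc 0 t, ENNReal.ofReal r < T := fun r hr =>
    (ENNReal.ofReal_le_ofReal hr.2).trans_lt htT
  refine frob_sub_le_integral hs.1 (hF s hs.1 (hsT s hs)) (hρ.intervalIntegrable _ _) ?_
  filter_upwards [hF'] with r hr hrs
  have hr' : r ∈ Icc 0 t := ⟨hrs.1.le, hrs.2.trans hs.2⟩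
  exact (hr hr'.1 (hsT r hr')).trans_eq (hgρ hr')

end Trajectory

lemma continuous_mseLoss {N d0 d1 d2 : ℕ} (X : Matrix (Fin N) (Fin d0) ℝ)
    (Y : Matrix (Fin N) (Fin d2) ℝ) :
    Continuous fun p : Matrix (Fin d0) (Fin d1) ℝ × Matrix (Fin d1) (Fin d2) ℝ =>
      mseLoss X Y p.1 p.2 := by
  have hrelu : Continuous relu := continuous_id.max continuous_const
  unfold mseLoss
  exact continuous_const.mul ((continuous_frob.comp (continuous_const.sub
    (((continuous_const.matrix_mul continuous_fst).matrix_map hrelu).matrix_mul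
      continuous_snd))).pow 2)

theorem mul_frob_sub_le_of_frob_sub_le {m n p q : ℕ} {F : ℝ → Matrix (Fin m) (Fin n) ℝ}
    {G : ℝ → Matrix (Fin p) (Fin q) ℝ} {ℓ : ℝ → ℝ} {a t : ℝ} (hF : Continuous F)
    (hG : Continuous G) (hℓ : Continuous ℓ) (hℓ0 : ∀ s, 0 ≤ ℓ s) (ha : 0 ≤ a) (ht : 0 ≤ t)
    (hFG : ∀ s ∈ Icc 0 t, frob (F s - F 0) ≤ √2 * a * ∫ r in (0:ℝ)..s, ℓ r * frob (G r))
    (hGF : ∀ s ∈ Icc 0 t, frob (G s - G 0) ≤ √2 * a * ∫ r in (0:ℝ)..s, ℓ r * frob (F r)) :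
    a * frob (F t - F 0) ≤
      1 / 2 * (2 * √2 * a ^ 2 * frob (G 0) * (∫ r in (0:ℝ)..t, ℓ r)
          + 2 * a ^ 3 * frob (F 0) * (∫ r in (0:ℝ)..t, ℓ r) ^ 2) *
        exp (a ^ 2 * (∫ r in (0:ℝ)..t, ℓ r) ^ 2) := by
  have hvw := integral_mul_le_of_le_add_integral_mul (v := fun s => frob (G s))
    (w := fun s => frob (F s)) (b := √2 * a) hℓ hℓ0
    (fun s => (hℓ.integral_hasStrictDerivAt 0 s).hasDerivAt) integral_same (by fun_prop)
    (by fun_prop) (frob_nonneg _) (frob_nonneg _) (by positivity) ht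
    (fun s hs => (frob_le_frob_add_frob_sub (G s) (G 0)).trans (by linarith [hGF s hs]))
    (fun s hs => (frob_le_frob_add_frob_sub (F s) (F 0)).trans (by linarith [hFG s hs]))
  have h2 : √2 ^ 2 = 2 := sq_sqrt zero_le_two
  calc a * frob (F t - F 0) ≤ a * (√2 * a * ∫ r in (0:ℝ)..t, ℓ r * frob (G r)) := by
        gcongr; exact hFG t ⟨ht, le_rfl⟩
    _ ≤ a * (√2 * a * ((frob (G 0) * (∫ r in (0:ℝ)..t, ℓ r) + √2 * a * frob (F 0) *
          ((∫ r in (0:ℝ)..t, ℓ r) ^ 2 / 2)) *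
          exp ((√2 * a) ^ 2 / 2 * (∫ r in (0:ℝ)..t, ℓ r) ^ 2))) := by
        gcongr
    _ = _ := by
        rw [mul_pow, h2]
        ring_nf
        rw [h2]
        ring

theorem statement4_general
    (N d0 d1 d2 : ℕ)
    (X : Matrix (Fin N) (Fin d0) ℝ) (Y : Matrix (Fin N) (Fin d2) ℝ)
    (T : ℝ≥0∞)
    (W : ℝ → Matrix (Fin d0) (Fin d1) ℝ) (V : ℝ → Matrix (Fin d1) (Fin d2) ℝ)
    (W' : ℝ → Matrix (Fin d0) (Fin d1) ℝ) (V' : ℝ → Matrix (Fin d1) (Fin d2) ℝ)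
    (L : ℝ → ℝ) (hL : L = fun s => mseLoss X Y (W s) (V s))
    -- absolute continuity of `W` with derivative `W'` (entrywise, in the sense of FTC)
    (hWac : ∀ t : ℝ, 0 ≤ t → ENNReal.ofReal t < T → ∀ i j,
      IntervalIntegrable (fun s => W' s i j) volume 0 t ∧
      W t i j - W 0 i j = ∫ s in (0:ℝ)..t, W' s i j)
    -- absolute continuity of `V` with derivative `V'`
    (hVac : ∀ t : ℝ, 0 ≤ t → ENNReal.ofReal t < T → ∀ i j,
      IntervalIntegrable (fun s => V' s i j) volume 0 t ∧
      V t i j - V 0 i j = ∫ s in (0:ℝ)..t, V' s i j)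
    -- a.e. derivative bounds on [0,T)
    (hW' : ∀ᵐ s ∂volume, 0 ≤ s → ENNReal.ofReal s < T →
      frob (W' s) ≤ opNorm X * frob (V s) * Real.sqrt (2 * L s))
    (hV' : ∀ᵐ s ∂volume, 0 ≤ s → ENNReal.ofReal s < T →
      frob (V' s) ≤ opNorm X * frob (W s) * Real.sqrt (2 * L s))
    (c₁ c₂ c : ℝ)
    (hc₁ : c₁ = 2 * Real.sqrt 2 * opNorm X ^ 2 * frob (V 0))
    (hc₂ : c₂ = 2 * opNorm X ^ 3 * frob (W 0))
    (hc : c = opNorm X ^ 2) :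
    ∀ t : ℝ, 0 ≤ t → ENNReal.ofReal t < T →
      opNorm X * frob (W t - W 0) ≤
        (1 / 2) * (c₁ * (∫ s in (0:ℝ)..t, Real.sqrt (L s))
            + c₂ * (∫ s in (0:ℝ)..t, Real.sqrt (L s)) ^ 2) *
          Real.exp (c * (∫ s in (0:ℝ)..t, Real.sqrt (L s)) ^ 2) := by
  subst hL hc₁ hc₂ hc
  intro t ht htT
  set a := opNorm X
  obtain ⟨W₁, hW₁c, hW₁⟩ := exists_continuous_eqOn_of_sub_eq_integral ht htT hWac
  obtain ⟨V₁, hV₁c, hV₁⟩ := exists_continuous_eqOn_of_sub_eq_integral ht htT hVac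
  set ℓ : ℝ → ℝ := fun s => √(mseLoss X Y (W₁ s) (V₁ s))
  have hℓc : Continuous ℓ := ((continuous_mseLoss X Y).comp (hW₁c.prodMk hV₁c)).sqrt
  have hℓ : EqOn ℓ (fun s => √(mseLoss X Y (W s) (V s))) (Icc 0 t) := fun s hs => by
    simp only [ℓ, hW₁ hs, hV₁ hs]
  have hrate {m n : ℕ} (F F₁ : ℝ → Matrix (Fin m) (Fin n) ℝ) (hF : EqOn F₁ F (Icc 0 t)) :
      EqOn (fun s => a * frob (F s) * √(2 * mseLoss X Y (W s) (V s)))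
        (fun s => √2 * a * (ℓ s * frob (F₁ s))) (Icc 0 t) := fun s hs => by
    simp only [hF hs, ← hℓ hs, sqrt_mul zero_le_two]
    ring
  have h0 : (0:ℝ) ∈ Icc 0 t := ⟨le_rfl, ht⟩
  have hW : ∀ s ∈ Icc 0 t, frob (W₁ s - W₁ 0) ≤ √2 * a * ∫ r in (0:ℝ)..s, ℓ r * frob (V₁ r) :=
    fun s hs => by
      rw [hW₁ hs, hW₁ h0, ← intervalIntegral.integral_const_mul]
      exact frob_sub_le_integral_of_ae_le hWac hW' htT (by fun_prop) (hrate V V₁ hV₁) s hs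
  have hV : ∀ s ∈ Icc 0 t, frob (V₁ s - V₁ 0) ≤ √2 * a * ∫ r in (0:ℝ)..s, ℓ r * frob (W₁ r) :=
    fun s hs => by
      rw [hV₁ hs, hV₁ h0, ← intervalIntegral.integral_const_mul]
      exact frob_sub_le_integral_of_ae_le hVac hV' htT (by fun_prop) (hrate W W₁ hW₁) s hs
  have hL : ∫ s in (0:ℝ)..t, √(mseLoss X Y (W s) (V s)) = ∫ s in (0:ℝ)..t, ℓ s :=
    integral_congr fun s hs => (hℓ (uIcc_of_le ht ▸ hs)).symm
  beta_reduce
  rw [hL, ← hW₁ ⟨ht, le_rfl⟩, ← hW₁ h0, ← hV₁ h0]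
  exact mul_frob_sub_le_of_frob_sub_le hW₁c hV₁c hℓc (fun _ => sqrt_nonneg _) (norm_nonneg _) ht
    hW hV

/-- Lemma: refined increment bound for the first-layer trajectory. -/
theorem statement4
    (N d0 d1 d2 : ℕ) (hN : 0 < N) (hd0 : 0 < d0) (hd1 : 0 < d1) (hd2 : 0 < d2)
    (X : Matrix (Fin N) (Fin d0) ℝ) (Y : Matrix (Fin N) (Fin d2) ℝ)
    (T : ℝ≥0∞) (hT : 0 < T)
    (W : ℝ → Matrix (Fin d0) (Fin d1) ℝ) (V : ℝ → Matrix (Fin d1) (Fin d2) ℝ)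
    (W' : ℝ → Matrix (Fin d0) (Fin d1) ℝ) (V' : ℝ → Matrix (Fin d1) (Fin d2) ℝ)
    (L : ℝ → ℝ) (hL : L = fun s => mseLoss X Y (W s) (V s))
    -- absolute continuity of `W` with derivative `W'` (entrywise, in the sense of FTC)
    (hWac : ∀ t : ℝ, 0 ≤ t → ENNReal.ofReal t < T → ∀ i j,
      IntervalIntegrable (fun s => W' s i j) volume 0 t ∧
      W t i j - W 0 i j = ∫ s in (0:ℝ)..t, W' s i j)
    -- absolute continuity of `V` with derivative `V'`
    (hVac : ∀ t : ℝ, 0 ≤ t → ENNReal.ofReal t < T → ∀ i j,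
      IntervalIntegrable (fun s => V' s i j) volume 0 t ∧
      V t i j - V 0 i j = ∫ s in (0:ℝ)..t, V' s i j)
    -- a.e. derivative bounds on [0,T)
    (hW' : ∀ᵐ s ∂volume, 0 ≤ s → ENNReal.ofReal s < T →
      frob (W' s) ≤ opNorm X * frob (V s) * Real.sqrt (2 * L s))
    (hV' : ∀ᵐ s ∂volume, 0 ≤ s → ENNReal.ofReal s < T →
      frob (V' s) ≤ opNorm X * frob (W s) * Real.sqrt (2 * L s))
    (c₁ c₂ c : ℝ)
    (hc₁ : c₁ = 2 * Real.sqrt 2 * opNorm X ^ 2 * frob (V 0))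
    (hc₂ : c₂ = 2 * opNorm X ^ 3 * frob (W 0))
    (hc : c = opNorm X ^ 2) :
    ∀ t : ℝ, 0 ≤ t → ENNReal.ofReal t < T →
      opNorm X * frob (W t - W 0) ≤
        (1 / 2) * (c₁ * (∫ s in (0:ℝ)..t, Real.sqrt (L s))
            + c₂ * (∫ s in (0:ℝ)..t, Real.sqrt (L s)) ^ 2) *
          Real.exp (c * (∫ s in (0:ℝ)..t, Real.sqrt (L s)) ^ 2) :=
  statement4_general N d0 d1 d2 X Y T W V W' V' L hL hWac hVac hW' hV' c₁ c₂ c hc₁ hc₂ hc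
end
end

section
/- There exist constants c, C > 0 such that for every even integer k ≥ 4: c · k^{−5/2} ≤ μ_k(φ)² ≤ C · k^{−5/2}, where μ_k(φ) is the k-th Hermite coefficient of the ReLU function. -/
open MeasureTheory ProbabilityTheory

noncomputable section

/-- The `k`-th probabilists' Hermite polynomial, as a function `ℝ → ℝ`. -/
def hermiteFun (k : ℕ) (z : ℝ) : ℝ := Polynomial.aeval z (Polynomial.hermite k)

/-- The `k`-th Hermite coefficient `μ_k(f) = E[f(g) h_k(g)] / √(E[h_k(g)²])`
of a function `f : ℝ → ℝ`, with `g` a standard Gaussian. -/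
def hermiteCoeff (f : ℝ → ℝ) (k : ℕ) : ℝ :=
  (∫ z, f z * hermiteFun k z ∂(gaussianReal 0 1)) /
    Real.sqrt (∫ z, hermiteFun k z ^ 2 ∂(gaussianReal 0 1))

/-!
Gaussian integration by parts, `∫ (p' - x p) e^{-x²/2} = 0` over `ℝ` and `= -p(0)` over `(0, ∞)`,
applied to products of Hermite polynomials gives `‖h_n‖² = n!` and
`∫_{x > 0} x h_{n+2}(x) e^{-x²/2} dx = h_n(0)`. Hence `μ_{n+2}(φ)² = h_n(0)² / (2π (n+2)!)`, and since
`h_{n+2}(0) = -(n+1) h_n(0)`, consecutive even coefficients satisfy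
`μ_{2m+4}² = μ_{2m+2}² (2m+1)² / ((2m+3)(2m+4))`. This ratio makes `μ_k⁴ k⁵` nonincreasing and
`μ_k⁴ k³ (k-2)²` nondecreasing along even `k`, which traps `μ_k²` between constant multiples of
`k^{-5/2}` once `k ≥ 4`.
-/

open Polynomial Real Filter Topology Set
open scoped Nat

namespace Polynomial

theorem integrable_eval_mul_exp_neg_sq_div_two (p : ℝ[X]) :
    Integrable fun x ↦ p.eval x * exp (-(x ^ 2 / 2)) := by
  induction p using Polynomial.induction_on' with
  | add p q hp hq => simpa only [eval_add, add_mul, Pi.add_def] using hp.add hq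
  | monomial n a =>
    have h := integrable_rpow_mul_exp_neg_mul_sq one_half_pos (s := n)
      (neg_one_lt_zero.trans_le n.cast_nonneg)
    simp_rw [rpow_natCast] at h
    convert h.const_mul a using 2 with x
    simp only [eval_monomial]
    ring_nf

theorem tendsto_eval_mul_exp_neg_sq_div_two_cocompact (p : ℝ[X]) :
    Tendsto (fun x ↦ p.eval x * exp (-(x ^ 2 / 2))) (cocompact ℝ) (𝓝 0) := by
  induction p using Polynomial.induction_on' with
  | add p q hp hq => simpa only [eval_add, add_mul, add_zero] using hp.add hq
  | monomial n a =>
    have h := tendsto_rpow_abs_mul_exp_neg_mul_sq_cocompact one_half_pos n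
    simp_rw [rpow_natCast] at h
    refine squeeze_zero_norm (fun x ↦ le_of_eq ?_) (by simpa using h.const_mul |a|)
    simp only [eval_monomial, norm_mul, norm_pow, Real.norm_eq_abs, abs_exp]
    ring_nf

theorem hasDerivAt_eval_mul_exp_neg_sq_div_two (p : ℝ[X]) (x : ℝ) :
    HasDerivAt (fun x ↦ p.eval x * exp (-(x ^ 2 / 2)))
      ((derivative p - X * p).eval x * exp (-(x ^ 2 / 2))) x := by
  have hexp : HasDerivAt (fun x : ℝ ↦ exp (-(x ^ 2 / 2))) (-x * exp (-(x ^ 2 / 2))) x := by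
    convert (((hasDerivAt_pow 2 x).div_const 2).fun_neg).exp using 1
    ring
  refine ((p.hasDerivAt x).mul hexp).congr_deriv ?_
  simp only [eval_sub, eval_mul, eval_X]
  ring

theorem integral_eval_derivative_sub_X_mul_mul_exp (p : ℝ[X]) :
    ∫ x, (derivative p - X * p).eval x * exp (-(x ^ 2 / 2)) = 0 := by
  rw [integral_of_hasDerivAt_of_tendsto (hasDerivAt_eval_mul_exp_neg_sq_div_two p)
    (integrable_eval_mul_exp_neg_sq_div_two _)
    ((tendsto_eval_mul_exp_neg_sq_div_two_cocompact p).mono_left atBot_le_cocompact)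
    ((tendsto_eval_mul_exp_neg_sq_div_two_cocompact p).mono_left atTop_le_cocompact), sub_zero]

theorem integral_Ioi_eval_derivative_sub_X_mul_mul_exp (p : ℝ[X]) :
    ∫ x in Ioi 0, (derivative p - X * p).eval x * exp (-(x ^ 2 / 2)) = -p.eval 0 := by
  rw [integral_Ioi_of_hasDerivAt_of_tendsto' (fun x _ ↦ hasDerivAt_eval_mul_exp_neg_sq_div_two p x)
    (integrable_eval_mul_exp_neg_sq_div_two _).integrableOn
    ((tendsto_eval_mul_exp_neg_sq_div_two_cocompact p).mono_left atTop_le_cocompact)]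
  simp

theorem derivative_hermite_succ (n : ℕ) :
    derivative (hermite (n + 1)) = ((n : ℤ[X]) + 1) * hermite n := by
  induction n with
  | zero => simp
  | succ n ih =>
    rw [hermite_succ (n + 1), derivative_sub, derivative_mul, derivative_X, one_mul, ih,
      derivative_mul, hermite_succ n]
    simp only [derivative_add, derivative_natCast, derivative_one, add_zero]
    push_cast
    ring

end Polynomial

def realHermite (n : ℕ) : ℝ[X] := (hermite n).map (Int.castRingHom ℝ)

theorem hermiteFun_eq_eval_realHermite (n : ℕ) (x : ℝ) :
    hermiteFun n x = (realHermite n).eval x := by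
  rw [hermiteFun, realHermite, aeval_def, eval_map, algebraMap_int_eq]

theorem realHermite_succ (n : ℕ) :
    realHermite (n + 1) = X * realHermite n - derivative (realHermite n) := by
  unfold realHermite
  rw [hermite_succ, Polynomial.map_sub, Polynomial.map_mul, map_X, derivative_map]

theorem derivative_realHermite_succ (n : ℕ) :
    derivative (realHermite (n + 1)) = ((n : ℝ[X]) + 1) * realHermite n := by
  unfold realHermite
  rw [derivative_map, derivative_hermite_succ, Polynomial.map_mul,
    Polynomial.map_add, Polynomial.map_natCast, Polynomial.map_one]

theorem X_mul_realHermite_succ (n : ℕ) :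
    X * realHermite (n + 1) = realHermite (n + 2) + ((n : ℝ[X]) + 1) * realHermite n := by
  rw [realHermite_succ (n + 1), derivative_realHermite_succ]
  ring

theorem eval_zero_realHermite_add_two (n : ℕ) :
    (realHermite (n + 2)).eval 0 = -((n : ℝ) + 1) * (realHermite n).eval 0 := by
  have h := congrArg (eval 0) (X_mul_realHermite_succ n)
  simp only [eval_mul, eval_X, zero_mul, eval_add, eval_natCast, eval_one] at h
  linarith

theorem integral_Ioi_eval_realHermite_succ_mul_exp (n : ℕ) :
    ∫ x in Ioi 0, (realHermite (n + 1)).eval x * exp (-(x ^ 2 / 2)) = (realHermite n).eval 0 := by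
  rw [realHermite_succ, ← neg_sub, ← neg_neg (eval 0 (realHermite n)),
    ← integral_Ioi_eval_derivative_sub_X_mul_mul_exp, ← integral_neg]
  simp only [eval_neg, neg_mul]

theorem integral_Ioi_mul_eval_realHermite_add_two_mul_exp (n : ℕ) :
    ∫ x in Ioi 0, x * (realHermite (n + 2)).eval x * exp (-(x ^ 2 / 2)) =
      (realHermite n).eval 0 := by
  have hint (p : ℝ[X]) := (integrable_eval_mul_exp_neg_sq_div_two p).integrableOn (s := Ioi 0)
  have hX (x : ℝ) : x * (realHermite (n + 2)).eval x =
      (realHermite (n + 3)).eval x + ((n : ℝ) + 2) * (realHermite (n + 1)).eval x := by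
    simpa [add_assoc, one_add_one_eq_two] using
      congrArg (eval x) (X_mul_realHermite_succ (n + 1))
  calc ∫ x in Ioi 0, x * (realHermite (n + 2)).eval x * exp (-(x ^ 2 / 2))
      = ∫ x in Ioi 0, ((realHermite (n + 3)).eval x * exp (-(x ^ 2 / 2)) +
          ((n : ℝ) + 2) * ((realHermite (n + 1)).eval x * exp (-(x ^ 2 / 2)))) := by
        congr 1 with x
        rw [hX]
        ring
    _ = (realHermite (n + 2)).eval 0 + ((n : ℝ) + 2) * (realHermite n).eval 0 := by
        rw [integral_add (hint _) ((hint _).const_mul _), integral_const_mul,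
          integral_Ioi_eval_realHermite_succ_mul_exp, integral_Ioi_eval_realHermite_succ_mul_exp]
    _ = (realHermite n).eval 0 := by
        rw [eval_zero_realHermite_add_two]
        ring

theorem derivative_sub_X_mul_realHermite_mul_succ (n : ℕ) :
    derivative (realHermite n * realHermite (n + 1)) - X * (realHermite n * realHermite (n + 1)) =
      ((n : ℝ[X]) + 1) * realHermite n ^ 2 - realHermite (n + 1) ^ 2 := by
  have h : derivative (realHermite n) = X * realHermite n - realHermite (n + 1) := by
    rw [realHermite_succ]
    ring
  rw [derivative_mul, derivative_realHermite_succ, h]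
  ring

theorem integral_eval_realHermite_sq_mul_exp (n : ℕ) :
    ∫ x, (realHermite n).eval x ^ 2 * exp (-(x ^ 2 / 2)) = n ! * √(2 * π) := by
  induction n with
  | zero =>
    simp only [realHermite, hermite_zero, map_one, Polynomial.map_one, eval_one, one_pow, one_mul,
      Nat.factorial_zero, Nat.cast_one]
    convert integral_gaussian (1 / 2) using 3 with x <;> ring_nf
  | succ n ih =>
    have h := integral_eval_derivative_sub_X_mul_mul_exp (realHermite n * realHermite (n + 1))
    have hint (k : ℕ) : Integrable fun x ↦ (realHermite k).eval x ^ 2 * exp (-(x ^ 2 / 2)) := by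
      convert integrable_eval_mul_exp_neg_sq_div_two (realHermite k ^ 2) using 3
      rw [eval_pow]
    simp only [derivative_sub_X_mul_realHermite_mul_succ, eval_sub, eval_mul, eval_add, eval_pow,
      eval_natCast, eval_one, sub_mul, mul_assoc] at h
    rw [integral_sub ((hint n).const_mul _) (hint (n + 1)),
      integral_const_mul, sub_eq_zero, ih] at h
    rw [← h, Nat.factorial_succ]
    push_cast
    ring

theorem integral_gaussianReal_zero_one (f : ℝ → ℝ) :
    ∫ z, f z ∂gaussianReal 0 1 = (√(2 * π))⁻¹ * ∫ x, f x * exp (-(x ^ 2 / 2)) := by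
  rw [integral_gaussianReal_eq_integral_smul one_ne_zero, ← integral_const_mul]
  congr 1 with x
  simp only [gaussianPDFReal, NNReal.coe_one, mul_one, sub_zero, smul_eq_mul, neg_div]
  ring

theorem integral_hermiteFun_sq (n : ℕ) : ∫ z, hermiteFun n z ^ 2 ∂gaussianReal 0 1 = n ! := by
  simp_rw [integral_gaussianReal_zero_one, hermiteFun_eq_eval_realHermite,
    integral_eval_realHermite_sq_mul_exp]
  field_simp

theorem integral_relu_mul_hermiteFun_add_two (n : ℕ) :
    ∫ z, relu z * hermiteFun (n + 2) z ∂gaussianReal 0 1 =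
      (√(2 * π))⁻¹ * (realHermite n).eval 0 := by
  have hrelu : (fun x ↦ relu x * hermiteFun (n + 2) x * exp (-(x ^ 2 / 2))) =
      (Ioi 0).indicator fun x ↦ x * (realHermite (n + 2)).eval x * exp (-(x ^ 2 / 2)) := by
    ext x
    rcases le_or_gt x 0 with hx | hx
    · simp [relu, hx, indicator_of_notMem]
    · simp [relu, hx.le, hx, hermiteFun_eq_eval_realHermite]
  rw [integral_gaussianReal_zero_one, hrelu, integral_indicator measurableSet_Ioi,
    integral_Ioi_mul_eval_realHermite_add_two_mul_exp]

theorem hermiteCoeff_relu_add_two_sq (n : ℕ) :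
    hermiteCoeff relu (n + 2) ^ 2 = (realHermite n).eval 0 ^ 2 / (2 * π * (n + 2)!) := by
  rw [hermiteCoeff, integral_relu_mul_hermiteFun_add_two, integral_hermiteFun_sq, div_pow,
    mul_pow, inv_pow, sq_sqrt (by positivity), sq_sqrt (by positivity)]
  field_simp

theorem hermiteCoeff_relu_two_sq : hermiteCoeff relu 2 ^ 2 = 1 / (4 * π) := by
  rw [hermiteCoeff_relu_add_two_sq]
  norm_num [realHermite]
  ring

theorem hermiteCoeff_relu_add_four_sq (n : ℕ) :
    hermiteCoeff relu (n + 4) ^ 2 =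
      hermiteCoeff relu (n + 2) ^ 2 * (((n : ℝ) + 1) ^ 2 / ((n + 3) * (n + 4))) := by
  rw [hermiteCoeff_relu_add_two_sq (n + 2), hermiteCoeff_relu_add_two_sq n,
    eval_zero_realHermite_add_two, Nat.factorial_succ (n + 3), Nat.factorial_succ (n + 2)]
  push_cast
  field_simp
  ring

theorem hermiteCoeff_relu_two_mul_add_four_sq (m : ℕ) :
    hermiteCoeff relu (2 * (m + 1) + 2) ^ 2 =
      hermiteCoeff relu (2 * m + 2) ^ 2 * ((2 * m + 1) ^ 2 / ((2 * m + 3) * (2 * m + 4))) := by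
  rw [show 2 * (m + 1) + 2 = 2 * m + 4 by ring, hermiteCoeff_relu_add_four_sq]
  push_cast
  ring

theorem hermiteCoeff_relu_four_sq : hermiteCoeff relu 4 ^ 2 = 1 / (48 * π) := by
  rw [hermiteCoeff_relu_add_four_sq 0, hermiteCoeff_relu_two_sq]
  field_simp
  norm_num

section RatioBounds

variable {b : ℕ → ℝ}

theorem antitone_sq_mul_pow_five_of_ratio
    (hb : ∀ m : ℕ, b (m + 1) = b m * ((2 * m + 1) ^ 2 / ((2 * m + 3) * (2 * m + 4)))) :
    Antitone fun m : ℕ ↦ b m ^ 2 * (2 * m + 2) ^ 5 := by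
  refine antitone_nat_of_succ_le fun m ↦ ?_
  have hm : (0 : ℝ) ≤ m := m.cast_nonneg
  have key : ((2 * m + 1) ^ 2 / ((2 * m + 3) * (2 * m + 4))) ^ 2 * (2 * (m : ℝ) + 4) ^ 5 ≤
      (2 * m + 2) ^ 5 := by
    rw [div_pow, div_mul_eq_mul_div, div_le_iff₀ (by positivity)]
    nlinarith [pow_nonneg hm 2, pow_nonneg hm 3, pow_nonneg hm 4, pow_nonneg hm 5, pow_nonneg hm 6,
      pow_nonneg hm 7]
  calc b (m + 1) ^ 2 * (2 * ((m + 1 : ℕ) : ℝ) + 2) ^ 5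
      = b m ^ 2 * (((2 * m + 1) ^ 2 / ((2 * m + 3) * (2 * m + 4))) ^ 2 * (2 * m + 4) ^ 5) := by
        rw [hb]
        push_cast
        ring
    _ ≤ b m ^ 2 * (2 * m + 2) ^ 5 := by gcongr

theorem monotone_sq_mul_pow_three_mul_sq_of_ratio
    (hb : ∀ m : ℕ, b (m + 1) = b m * ((2 * m + 1) ^ 2 / ((2 * m + 3) * (2 * m + 4)))) :
    Monotone fun m : ℕ ↦ b m ^ 2 * (2 * m + 2) ^ 3 * (2 * m) ^ 2 := by
  refine monotone_nat_of_le_succ fun m ↦ ?_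
  have hm : (0 : ℝ) ≤ m := m.cast_nonneg
  have key : (2 * m + 2) ^ 3 * (2 * (m : ℝ)) ^ 2 ≤
      ((2 * m + 1) ^ 2 / ((2 * m + 3) * (2 * m + 4))) ^ 2 * ((2 * m + 4) ^ 3 * (2 * m + 2) ^ 2) := by
    rw [div_pow, div_mul_eq_mul_div, le_div_iff₀ (by positivity)]
    nlinarith [pow_nonneg hm 2, pow_nonneg hm 3, pow_nonneg hm 4, pow_nonneg hm 5, pow_nonneg hm 6,
      pow_nonneg hm 7]
  calc b m ^ 2 * (2 * (m : ℝ) + 2) ^ 3 * (2 * m) ^ 2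
      = b m ^ 2 * ((2 * m + 2) ^ 3 * (2 * m) ^ 2) := by ring
    _ ≤ b m ^ 2 * (((2 * m + 1) ^ 2 / ((2 * m + 3) * (2 * m + 4))) ^ 2 *
          ((2 * m + 4) ^ 3 * (2 * m + 2) ^ 2)) := by gcongr
    _ = b (m + 1) ^ 2 * (2 * ((m + 1 : ℕ) : ℝ) + 2) ^ 3 * (2 * ((m + 1 : ℕ) : ℝ)) ^ 2 := by
        rw [hb]
        push_cast
        ring

end RatioBounds

theorem sq_rpow_five_div_two {y : ℝ} (hy : 0 ≤ y) : (y ^ ((5 : ℝ) / 2)) ^ 2 = y ^ 5 := by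
  rw [← rpow_natCast, ← rpow_mul hy]
  norm_num

theorem mul_rpow_neg_five_div_two_le {x y c : ℝ} (hx : 0 ≤ x) (hy : 0 < y) (hc : 0 ≤ c)
    (h : c ^ 2 ≤ x ^ 2 * y ^ 5) : c * y ^ (-(5 : ℝ) / 2) ≤ x := by
  have hs : 0 < y ^ ((5 : ℝ) / 2) := rpow_pos_of_pos hy _
  rw [neg_div, rpow_neg hy.le, ← div_eq_mul_inv, div_le_iff₀ hs]
  rw [← sq_rpow_five_div_two hy.le, ← mul_pow] at h
  exact (pow_le_pow_iff_left₀ hc (by positivity) two_ne_zero).1 h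

theorem le_mul_rpow_neg_five_div_two {x y C : ℝ} (hx : 0 ≤ x) (hy : 0 < y) (hC : 0 ≤ C)
    (h : x ^ 2 * y ^ 5 ≤ C ^ 2) : x ≤ C * y ^ (-(5 : ℝ) / 2) := by
  have hs : 0 < y ^ ((5 : ℝ) / 2) := rpow_pos_of_pos hy _
  rw [neg_div, rpow_neg hy.le, ← div_eq_mul_inv, le_div_iff₀ hs]
  rw [← sq_rpow_five_div_two hy.le, ← mul_pow] at h
  exact (pow_le_pow_iff_left₀ (by positivity) hC two_ne_zero).1 h

/-- the even Hermite coefficients of ReLU satisfy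
`μ_k(φ)² = Θ(k^{-5/2})`. -/
theorem statement12 :
    ∃ c C : ℝ, 0 < c ∧ 0 < C ∧
      ∀ k : ℕ, 4 ≤ k → Even k →
        c * (k : ℝ) ^ (-(5 : ℝ) / 2) ≤ hermiteCoeff relu k ^ 2 ∧
        hermiteCoeff relu k ^ 2 ≤ C * (k : ℝ) ^ (-(5 : ℝ) / 2) := by
  refine ⟨1 / (3 * π), 2 / (3 * π), by positivity, by positivity, fun k hk hkeven ↦ ?_⟩
  obtain ⟨m, rfl⟩ : ∃ m, k = 2 * m + 2 := by
    obtain ⟨r, rfl⟩ := hkeven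
    exact ⟨r - 1, by omega⟩
  have hm : 1 ≤ m := by omega
  have hup := antitone_sq_mul_pow_five_of_ratio (b := fun m ↦ hermiteCoeff relu (2 * m + 2) ^ 2)
    hermiteCoeff_relu_two_mul_add_four_sq hm
  have hlow := monotone_sq_mul_pow_three_mul_sq_of_ratio
    (b := fun m ↦ hermiteCoeff relu (2 * m + 2) ^ 2) hermiteCoeff_relu_two_mul_add_four_sq hm
  norm_num [hermiteCoeff_relu_four_sq] at hup hlow
  have hk : ((2 * m + 2 : ℕ) : ℝ) = 2 * m + 2 := by push_cast; ring
  rw [hk]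
  constructor
  · refine mul_rpow_neg_five_div_two_le (sq_nonneg _) (by positivity) (by positivity) ?_
    refine (hlow.trans_eq' (by ring)).trans ?_
    calc _ ≤ (hermiteCoeff relu (2 * m + 2) ^ 2) ^ 2 * (2 * m + 2) ^ 3 * (2 * m + 2) ^ 2 := by
          gcongr
          linarith
      _ = _ := by ring
  · exact le_mul_rpow_neg_five_div_two (sq_nonneg _) (by positivity) (by positivity)
      (hup.trans_eq (by ring))

end
end
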